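/- Right pseudo-Ore condition: if (a,C₁,x^t) ≤ (b,C₂,y^t), then [a:C₁:x^t] = [b:C₂:y^t] in Σ⁻¹X, i.e., (a,C₁,x^t) ∼ (b,C₂,y^t). -/

import Mathlib

open Matrix

variable {R X : Type*}

/-- Action of a matrix over `R` on a column of module elements. -/
def mulVecX [Ring R] [AddCommGroup X] [Module R X] {m n : ℕ}
    (A : Matrix (Fin m) (Fin n) R) (x : Fin n → X) : Fin m → X :=
  fun i => ∑ j, A i j • x j

/-- An ordered triple `(a, C, xᵗ)` with `a ∈ Rⁿ`, `C` an `n × n` matrix, `x ∈ Xⁿ`. -/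
structure Triple (R X : Type*) [Ring R] [AddCommGroup X] [Module R X] where
  n : ℕ
  a : Fin n → R
  C : Matrix (Fin n) (Fin n) R
  x : Fin n → X

namespace Triple

variable [Ring R] [AddCommGroup X] [Module R X]

/-- Block sum of ordered triples: `([a b], diag(C,D), [xᵗ; yᵗ])`. -/
def add (t s : Triple R X) : Triple R X where
  n := t.n + s.n
  a := Fin.append t.a s.a
  C := (Matrix.fromBlocks t.C 0 0 s.C).submatrix
        (finSumFinEquiv (m := t.n) (n := s.n)).symm finSumFinEquiv.symm
  x := Fin.append t.x s.x

/-- The congruence relation `≡`: same size, witnessed by invertible matrices `U₁, U₂`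
with `a = b U₁`, `yᵗ = U₂ xᵗ` and `C₂ U₁ = U₂ C₁`. -/
def Cong (t s : Triple R X) : Prop :=
  ∃ (h : t.n = s.n) (U₁ U₂ : Matrix (Fin t.n) (Fin t.n) R),
    IsUnit U₁ ∧ IsUnit U₂ ∧
    t.a = (fun j => s.a (Fin.cast h j)) ᵥ* U₁ ∧
    (fun i => s.x (Fin.cast h i)) = mulVecX U₂ t.x ∧
    s.C.submatrix (Fin.cast h) (Fin.cast h) * U₁ = U₂ * t.C

/-- The relation `(a,C₁,xᵗ) ≥ (b,C₂,yᵗ)`: there are matrices `A₁, A₂` with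
`a = b A₁`, `yᵗ = A₂ xᵗ` and `C₂ A₁ = A₂ C₁`. -/
def Ge (t s : Triple R X) : Prop :=
  ∃ A₁ A₂ : Matrix (Fin s.n) (Fin t.n) R,
    t.a = s.a ᵥ* A₁ ∧ s.x = mulVecX A₂ t.x ∧ s.C * A₁ = A₂ * t.C

/-- The relation `(a,C₁,xᵗ) ≤ (b,C₂,yᵗ)`: there are matrices `A₁, A₂` with
`xᵗ = A₁ yᵗ`, `b = a A₂` and `C₁ A₂ = A₁ C₂`. -/
def Le (t s : Triple R X) : Prop :=
  ∃ A₁ A₂ : Matrix (Fin t.n) (Fin s.n) R,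
    t.x = mulVecX A₁ s.x ∧ s.a = t.a ᵥ* A₂ ∧ t.C * A₂ = A₁ * s.C

end Triple

/-- A size-indexed collection of square matrices over `R`. -/
def MatSet (R : Type*) [Ring R] := ∀ n : ℕ, Set (Matrix (Fin n) (Fin n) R)

/-- `S` is a multiplicative set of matrices: it contains all permutation matrices,
is closed under products, and closed under block upper triangular combinations. -/
def IsMatMultSet [Ring R] (S : MatSet R) : Prop :=
  (∀ (n : ℕ) (σ : Equiv.Perm (Fin n)), σ.permMatrix R ∈ S n) ∧
  (∀ (n : ℕ) (C D : Matrix (Fin n) (Fin n) R), C ∈ S n → D ∈ S n → C * D ∈ S n) ∧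
  (∀ (n m : ℕ) (C : Matrix (Fin n) (Fin n) R) (D : Matrix (Fin m) (Fin m) R)
      (A : Matrix (Fin n) (Fin m) R), C ∈ S n → D ∈ S m →
    (Matrix.fromBlocks C A 0 D).submatrix finSumFinEquiv.symm finSumFinEquiv.symm ∈ S (n + m))

/-- The trivial triples `Σ⁻¹X₀`: finite sums of triples `(0,C,xᵗ)` and `(b,D,0ᵗ)` with
`C, D ∈ Σ`. -/
inductive IsTrivial [Ring R] [AddCommGroup X] [Module R X] (S : MatSet R) :
    Triple R X → Prop
  | zeroA (n : ℕ) (C : Matrix (Fin n) (Fin n) R) (x : Fin n → X) (hC : C ∈ S n) :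
      IsTrivial S ⟨n, 0, C, x⟩
  | zeroX (n : ℕ) (b : Fin n → R) (C : Matrix (Fin n) (Fin n) R) (hC : C ∈ S n) :
      IsTrivial S ⟨n, b, C, 0⟩
  | add {t s : Triple R X} : IsTrivial S t → IsTrivial S s → IsTrivial S (t.add s)

/-- The relation `∼`: triples become congruent after adding trivial triples. -/
def Sim [Ring R] [AddCommGroup X] [Module R X] (S : MatSet R) (t s : Triple R X) : Prop :=
  ∃ z₁ z₂ : Triple R X, IsTrivial S z₁ ∧ IsTrivial S z₂ ∧ (t.add z₁).Cong (s.add z₂)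

/-!
Write `t = (a, C₁, xᵗ)` and `s = (b, C₂, yᵗ)` with `xᵗ = A₁ yᵗ`, `b = a A₂` and `C₁ A₂ = A₁ C₂`.
Add the trivial triple `(0, C₂, yᵗ)` to `t` and `(a, C₁, 0ᵗ)` to `s`. Up to swapping the two
blocks of the second sum, this gives `([a 0], diag(C₁, C₂), [xᵗ; yᵗ])` and
`([a b], diag(C₁, C₂), [0ᵗ; yᵗ])`, which are congruent via the block unitriangular matrices
`U₁ = [[1, -A₂], [0, 1]]` and `U₂ = [[1, -A₁], [0, 1]]`.
-/

open scoped Matrix.Module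

namespace Matrix

variable {l m n α : Type*} [Fintype m] [DecidableEq m] [Fintype n] [DecidableEq n]

theorem isUnit_submatrix_equiv_of_isUnit [Fintype l] [DecidableEq l] [Semiring α]
    {A : Matrix m m α} (hA : IsUnit A) (e₁ e₂ : l ≃ m) : IsUnit (A.submatrix e₁ e₂) := by
  obtain ⟨u, rfl⟩ := hA
  refine ⟨⟨(↑u : Matrix m m α).submatrix e₁ e₂, (↑u⁻¹ : Matrix m m α).submatrix e₂ e₁, ?_, ?_⟩,
    rfl⟩ <;>
    simp only [submatrix_mul_equiv, Units.mul_inv, Units.inv_mul, submatrix_one_equiv]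

theorem isUnit_fromBlocks_one_zero_one [Ring α] (B : Matrix m n α) :
    IsUnit (fromBlocks 1 B 0 1 : Matrix (m ⊕ n) (m ⊕ n) α) := by
  refine ⟨⟨fromBlocks 1 B 0 1, fromBlocks 1 (-B) 0 1, ?_, ?_⟩, rfl⟩ <;>
    simp [fromBlocks_multiply, fromBlocks_one]

end Matrix

section Module

variable [Ring R] [AddCommGroup X] [Module R X]

theorem mulVecX_submatrix {ι : Type*} [Fintype ι] [DecidableEq ι] {m n : ℕ}
    (M : Matrix ι ι R) (σ : Fin m → ι) (e : ι ≃ Fin n) (x : Fin n → X) :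
    mulVecX (M.submatrix σ e.symm) x = (M • (x ∘ e)) ∘ σ := by
  funext i
  exact Fintype.sum_equiv e.symm _ _ fun _ => by simp

theorem fromBlocks_one_neg_zero_one_smul {m n : ℕ} (B : Matrix (Fin m) (Fin n) R)
    (x : Fin m → X) (y : Fin n → X) :
    (fromBlocks 1 (-B) 0 1 : Matrix (Fin m ⊕ Fin n) (Fin m ⊕ Fin n) R) • Sum.elim x y =
      Sum.elim (x - mulVecX B y) y := by
  ext (i | j) <;>
    simp [Fintype.sum_sum_type, mulVecX, one_apply, ite_smul, sub_eq_add_neg]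

end Module

namespace Triple

variable [Ring R] [AddCommGroup X] [Module R X]

-- `finSumFinEquiv`, typed with target `Fin (t.add s).n` (rather than `Fin (t.n + s.n)`) so that
-- the simp lemmas below match the goals produced by `cong_of_reindex`.
def blockEquiv (t s : Triple R X) : Fin t.n ⊕ Fin s.n ≃ Fin (t.add s).n :=
  finSumFinEquiv

@[simp]
theorem add_a_comp_blockEquiv (t s : Triple R X) :
    (t.add s).a ∘ blockEquiv t s = Sum.elim t.a s.a := by
  ext (i | j)
  · exact Fin.append_left _ _ i
  · exact Fin.append_right _ _ j

@[simp]
theorem add_x_comp_blockEquiv (t s : Triple R X) :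
    (t.add s).x ∘ blockEquiv t s = Sum.elim t.x s.x := by
  ext (i | j)
  · exact Fin.append_left _ _ i
  · exact Fin.append_right _ _ j

@[simp]
theorem add_C_submatrix_blockEquiv (t s : Triple R X) :
    (t.add s).C.submatrix (blockEquiv t s) (blockEquiv t s) = fromBlocks t.C 0 0 s.C := by
  simp only [add, submatrix_submatrix]
  exact (congrArg₂ _ (Equiv.symm_comp_self _) (Equiv.symm_comp_self _)).trans (submatrix_id_id _)

def blockSwapEquiv (t s : Triple R X) : Fin s.n ⊕ Fin t.n ≃ Fin (t.add s).n :=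
  (Equiv.sumComm _ _).trans (blockEquiv t s)

@[simp]
theorem add_a_comp_blockSwapEquiv (t s : Triple R X) :
    (t.add s).a ∘ blockSwapEquiv t s = Sum.elim s.a t.a :=
  (congrArg (· ∘ Sum.swap) (add_a_comp_blockEquiv t s)).trans Sum.elim_swap

@[simp]
theorem add_x_comp_blockSwapEquiv (t s : Triple R X) :
    (t.add s).x ∘ blockSwapEquiv t s = Sum.elim s.x t.x :=
  (congrArg (· ∘ Sum.swap) (add_x_comp_blockEquiv t s)).trans Sum.elim_swap

@[simp]
theorem add_C_submatrix_blockSwapEquiv (t s : Triple R X) :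
    (t.add s).C.submatrix (blockSwapEquiv t s) (blockSwapEquiv t s) = fromBlocks s.C 0 0 t.C :=
  (congrArg (·.submatrix Sum.swap Sum.swap) (add_C_submatrix_blockEquiv t s)).trans
    (fromBlocks_submatrix_sum_swap_sum_swap _ _ _ _)

theorem cong_of_reindex {ι : Type*} [Fintype ι] [DecidableEq ι] {t s : Triple R X}
    (e : ι ≃ Fin t.n) (f : ι ≃ Fin s.n) {U₁ U₂ : Matrix ι ι R}
    (hU₁ : IsUnit U₁) (hU₂ : IsUnit U₂) (ha : t.a ∘ e = (s.a ∘ f) ᵥ* U₁)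
    (hx : s.x ∘ f = U₂ • (t.x ∘ e)) (hC : s.C.submatrix f f * U₁ = U₂ * t.C.submatrix e e) :
    t.Cong s := by
  have h : t.n = s.n := by simpa using Fintype.card_congr (e.symm.trans f)
  let σ : Fin t.n ≃ ι := (finCongr h).trans f.symm
  have hcast : (Fin.cast h : Fin t.n → Fin s.n) = f ∘ σ := by funext i; simp [σ]
  refine ⟨h, U₁.submatrix σ e.symm, U₂.submatrix σ e.symm,
    isUnit_submatrix_equiv_of_isUnit hU₁ _ _, isUnit_submatrix_equiv_of_isUnit hU₂ _ _,
    ?_, ?_, ?_⟩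
  · change t.a = (s.a ∘ Fin.cast h) ᵥ* _
    simp [submatrix_vecMul_equiv, hcast, ← ha, Function.comp_assoc]
  · change s.x ∘ Fin.cast h = _
    rw [mulVecX_submatrix, ← hx, hcast, Function.comp_assoc]
  · have hs : s.C.submatrix (Fin.cast h) (Fin.cast h) = (s.C.submatrix f f).submatrix σ σ := by
      rw [submatrix_submatrix, hcast]
    have ht : t.C = (t.C.submatrix e e).submatrix e.symm e.symm := by
      simp [submatrix_submatrix]
    rw [hs, ht, submatrix_mul_equiv, submatrix_mul_equiv, hC]

theorem Le.cong_add {t s : Triple R X} (h : t.Le s) :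
    (t.add ⟨s.n, 0, s.C, s.x⟩).Cong (s.add ⟨t.n, t.a, t.C, 0⟩) := by
  obtain ⟨A₁, A₂, hx, hb, hC⟩ := h
  refine cong_of_reindex (blockEquiv _ _) (blockSwapEquiv s ⟨t.n, t.a, t.C, 0⟩)
    (isUnit_fromBlocks_one_zero_one (-A₂)) (isUnit_fromBlocks_one_zero_one (-A₁)) ?_ ?_ ?_
  · simp [vecMul_fromBlocks, vecMul_neg, hb]
  · simp [fromBlocks_one_neg_zero_one_smul, hx]
  · simp [fromBlocks_multiply, hC]

end Triple

theorem le_imp_sim_general [Ring R] [AddCommGroup X] [Module R X] (S : MatSet R)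
    (t s : Triple R X) (ht : t.C ∈ S t.n) (hs : s.C ∈ S s.n)
    (h : t.Le s) : Sim S t s :=
  ⟨_, _, .zeroA _ _ _ hs, .zeroX _ _ _ ht, h.cong_add⟩

/-- Right pseudo-Ore condition: if `(a,C₁,xᵗ) ≤ (b,C₂,yᵗ)` then `(a,C₁,xᵗ) ∼ (b,C₂,yᵗ)`. -/
theorem le_imp_sim [Ring R] [AddCommGroup X] [Module R X] (S : MatSet R)
    (hS : IsMatMultSet S) (t s : Triple R X) (ht : t.C ∈ S t.n) (hs : s.C ∈ S s.n)
    (h : t.Le s) : Sim S t s :=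
  le_imp_sim_general S t s ht hs h
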